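/- arXiv:2512.11619 — 8 statements merged into one kernel-verified Lean document; each statement's English description precedes it below -/
import Mathlib

section
/- Let M be a real d×d' matrix whose columns all have the same Euclidean norm and whose convex hull 𝓜 contains the origin in its interior. If b̃ lies on the boundary of 𝓜, then the minimum of ‖t‖₁ over nonnegative t with M t = b̃ equals 1. -/
/-!
The gauge `γ` of `𝓜` is subadditive and positively homogeneous, and `γ ≤ 1` at every column
of `M`; hence `γ (M t) ≤ ∑ tⱼ` for `t ≥ 0`. Since `0` is interior to `𝓜`, the boundary of `𝓜`
is exactly the level set `γ = 1`, so every admissible `t` has `∑ tⱼ ≥ 1`. Conversely a boundary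
point lies in the closed set `𝓜` and so is a convex combination of the columns, which gives
an admissible `t` with `∑ tⱼ = 1`.
-/

open Set Topology

theorem exists_stdSimplex_sum_smul_eq_of_mem_convexHull_range {ι E : Type*} [Fintype ι]
    [AddCommGroup E] [Module ℝ E] {g : ι → E} {x : E} (hx : x ∈ convexHull ℝ (range g)) :
    ∃ w ∈ stdSimplex ℝ ι, ∑ i, w i • g i = x := by
  classical
  have hrange : range g = Fintype.linearCombination ℝ g '' range fun i => Pi.single i 1 := by
    rw [← range_comp]
    congr 1
    ext i
    simp [Fintype.linearCombination_apply_single]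
  rw [hrange, ← LinearMap.image_convexHull, convexHull_rangle_single_eq_stdSimplex] at hx
  obtain ⟨w, hw, rfl⟩ := hx
  exact ⟨w, hw, (Fintype.linearCombination_apply ℝ g w).symm⟩

theorem gauge_sum_smul_le {ι E : Type*} [AddCommGroup E] [Module ℝ E] {s : Set E}
    (hc : Convex ℝ s) (ha : Absorbent ℝ s) (u : Finset ι) {t : ι → ℝ} {g : ι → E}
    (ht : ∀ i ∈ u, 0 ≤ t i) (hg : ∀ i ∈ u, g i ∈ s) :
    gauge s (∑ i ∈ u, t i • g i) ≤ ∑ i ∈ u, t i :=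
  calc gauge s (∑ i ∈ u, t i • g i)
      ≤ ∑ i ∈ u, gauge s (t i • g i) :=
        Finset.le_sum_of_subadditive _ gauge_zero.le (gauge_add_le hc ha) _ _
    _ = ∑ i ∈ u, t i * gauge s (g i) :=
        Finset.sum_congr rfl fun i hi => by rw [gauge_smul_of_nonneg (ht i hi), smul_eq_mul]
    _ ≤ ∑ i ∈ u, t i :=
        Finset.sum_le_sum fun i hi =>
          mul_le_of_le_one_right (ht i hi) (gauge_le_one_of_mem (hg i hi))

theorem isLeast_sum_weights_of_mem_frontier_convexHull {ι E : Type*} [Fintype ι]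
    [AddCommGroup E] [Module ℝ E] [TopologicalSpace E] [IsTopologicalAddGroup E]
    [ContinuousSMul ℝ E] [T2Space E] {g : ι → E} {b : E}
    (h0 : (0 : E) ∈ interior (convexHull ℝ (range g)))
    (hb : b ∈ frontier (convexHull ℝ (range g))) :
    IsLeast {x : ℝ | ∃ t : ι → ℝ, (∀ i, 0 ≤ t i) ∧ ∑ i, t i • g i = b ∧ x = ∑ i, t i} 1 := by
  set K := convexHull ℝ (range g)
  have hK : Convex ℝ K := convex_convexHull ℝ _
  have hK0 : K ∈ 𝓝 0 := mem_interior_iff_mem_nhds.mp h0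
  constructor
  · have hbK : b ∈ K := ((finite_range g).isClosed_convexHull (𝕜 := ℝ)).frontier_subset hb
    obtain ⟨w, ⟨hw0, hw1⟩, hwb⟩ := exists_stdSimplex_sum_smul_eq_of_mem_convexHull_range hbK
    exact ⟨w, hw0, hwb, hw1.symm⟩
  · rintro x ⟨t, ht, rfl, rfl⟩
    calc (1 : ℝ) = gauge K (∑ i, t i • g i) :=
          ((gauge_eq_one_iff_mem_frontier hK hK0).mpr hb).symm
      _ ≤ ∑ i, t i := gauge_sum_smul_le hK (absorbent_nhds_zero hK0) _ (fun i _ => ht i)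
          fun i _ => subset_convexHull ℝ _ (mem_range_self i)

theorem stmt_1_general (d d' : ℕ) (M : Matrix (Fin d) (Fin d') ℝ)
    (hint : (0 : Fin d → ℝ) ∈ interior (convexHull ℝ (Set.range fun j => fun i => M i j)))
    (b : Fin d → ℝ)
    (hb : b ∈ frontier (convexHull ℝ (Set.range fun j => fun i => M i j))) :
    IsLeast {x : ℝ | ∃ t : Fin d' → ℝ,
      (∀ j, 0 ≤ t j) ∧ M.mulVec t = b ∧ x = ∑ j, |t j|} 1 := by
  convert isLeast_sum_weights_of_mem_frontier_convexHull hint hb using 3 with x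
  refine exists_congr fun t => and_congr_right fun ht => ?_
  have hmulVec : M.mulVec t = ∑ j, t j • fun i => M i j := by
    ext i
    simp [Matrix.mulVec, dotProduct, mul_comm]
  simp only [hmulVec, abs_of_nonneg (ht _)]

/-- If all columns of M have the same Euclidean norm and the convex hull 𝓜 of the columns
contains the origin in its interior, then for any point b̃ on the boundary of 𝓜 the
minimum of ‖t‖₁ over nonnegative t with M t = b̃ equals 1. -/
theorem stmt_1 (d d' : ℕ) (M : Matrix (Fin d) (Fin d') ℝ)
    (hnorm : ∀ j j' : Fin d', Real.sqrt (∑ i, (M i j) ^ 2) = Real.sqrt (∑ i, (M i j') ^ 2))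
    (hint : (0 : Fin d → ℝ) ∈ interior (convexHull ℝ (Set.range fun j => fun i => M i j)))
    (b : Fin d → ℝ)
    (hb : b ∈ frontier (convexHull ℝ (Set.range fun j => fun i => M i j))) :
    IsLeast {x : ℝ | ∃ t : Fin d' → ℝ,
      (∀ j, 0 ≤ t j) ∧ M.mulVec t = b ∧ x = ∑ j, |t j|} 1 :=
  stmt_1_general d d' M hint b hb
end

section
/- Let M be a real d×d' matrix whose convex hull of columns 𝓜 contains the origin in its interior, and suppose that every boundary point b̃ of 𝓜 satisfies ‖b̃‖₂ ≥ r > 0. Then for any b ∈ ℝ^d, there exists a nonnegative t with M t = b and ‖t‖₁ ≤ ‖b‖₂ / r. -/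
/-!
The Euclidean ball of radius `r` lies in `𝓜`: a point `x ∉ 𝓜` has gauge `a > 1` with respect
to `𝓜`, so `x / a` lies on the boundary yet has norm `‖x‖ / a < r`. Hence `r b / ‖b‖ ∈ 𝓜` is a
convex combination `M w` of the columns, and `t = (‖b‖ / r) w` works, with `‖t‖₁ = ‖b‖ / r`.
-/

open Topology

theorem Convex.mem_of_le_of_forall_frontier_le {E : Type*} [AddCommGroup E] [Module ℝ E]
    [TopologicalSpace E] [IsTopologicalAddGroup E] [ContinuousSMul ℝ E] {K : Set E}
    (hK : Convex ℝ K) (hK₀ : K ∈ 𝓝 0) (hKc : IsClosed K) {ν : E → ℝ}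
    (hν : ∀ c : ℝ, 0 < c → ∀ x, ν (c • x) = c * ν x) {r : ℝ} (hr : 0 < r)
    (hfr : ∀ p ∈ frontier K, r ≤ ν p) {x : E} (hx : ν x ≤ r) : x ∈ K := by
  rw [← hKc.closure_eq, ← gauge_le_one_iff_mem_closure hK hK₀]
  by_contra! hgt
  set a := gauge K x
  have ha : 0 < a := one_pos.trans hgt
  have hfront : a⁻¹ • x ∈ frontier K := by
    rw [← gauge_eq_one_iff_mem_frontier hK hK₀, gauge_smul_of_nonneg (inv_nonneg.2 ha.le),
      smul_eq_mul, inv_mul_cancel₀ ha.ne']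
  have hle : r * a ≤ ν x := by
    have := hfr _ hfront
    rwa [hν _ (inv_pos.2 ha), le_inv_mul_iff₀ ha, mul_comm] at this
  nlinarith

theorem sqrt_sum_sq_eq_norm_toLp {ι : Type*} [Fintype ι] (x : ι → ℝ) :
    Real.sqrt (∑ i, x i ^ 2) = ‖WithLp.toLp 2 x‖ := by
  simp [EuclideanSpace.norm_eq]

theorem Matrix.convexHull_range_col_eq_image_stdSimplex {m n : Type*} [Fintype n]
    [DecidableEq n] (M : Matrix m n ℝ) :
    convexHull ℝ (Set.range fun j i => M i j) = M.mulVec '' stdSimplex ℝ n := by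
  rw [← convexHull_rangle_single_eq_stdSimplex, ← M.coe_mulVecLin, LinearMap.image_convexHull,
    ← Set.range_comp]
  congr 2
  funext j i
  simp [Matrix.mulVec_single]

/-- If the convex hull 𝓜 of the columns of M contains 0 in its interior, and every boundary
point of 𝓜 has Euclidean norm at least r > 0, then any b ∈ ℝ^d can be written M t = b with
t ≥ 0 and ‖t‖₁ ≤ ‖b‖₂ / r. -/
theorem stmt_2 (d d' : ℕ) (M : Matrix (Fin d) (Fin d') ℝ) (r : ℝ) (hr : 0 < r)
    (hint : (0 : Fin d → ℝ) ∈ interior (convexHull ℝ (Set.range fun j => fun i => M i j)))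
    (hbd : ∀ p ∈ frontier (convexHull ℝ (Set.range fun j => fun i => M i j)),
      r ≤ Real.sqrt (∑ i, (p i) ^ 2))
    (b : Fin d → ℝ) :
    ∃ t : Fin d' → ℝ, (∀ j, 0 ≤ t j) ∧ M.mulVec t = b ∧
      (∑ j, |t j|) ≤ Real.sqrt (∑ i, (b i) ^ 2) / r := by
  simp only [sqrt_sum_sq_eq_norm_toLp] at hbd ⊢
  rcases eq_or_ne b 0 with rfl | hb
  · exact ⟨0, fun _ => le_rfl, M.mulVec_zero, by simp⟩
  set β := ‖WithLp.toLp 2 b‖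
  have hβ : 0 < β := norm_pos_iff.2 (by simpa using hb)
  have hmem : (r / β) • b ∈ convexHull ℝ (Set.range fun j i => M i j) :=
    (convex_convexHull ℝ _).mem_of_le_of_forall_frontier_le (mem_interior_iff_mem_nhds.1 hint)
      ((Set.finite_range _).isClosed_convexHull ℝ) (fun c hc x => by simp [norm_smul, hc.le]) hr hbd
      (by simp [β, norm_smul, abs_of_pos hr, hβ.ne'])
  rw [M.convexHull_range_col_eq_image_stdSimplex] at hmem
  obtain ⟨w, ⟨hw₀, hw₁⟩, hMw⟩ := hmem
  have hc : 0 ≤ β / r := by positivity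
  refine ⟨(β / r) • w, fun j => mul_nonneg hc (hw₀ j), ?_, ?_⟩
  · rw [Matrix.mulVec_smul, hMw, smul_smul, div_mul_div_cancel₀ hr.ne', div_self hβ.ne', one_smul]
  · simp only [Pi.smul_apply, smul_eq_mul, abs_mul, abs_of_nonneg hc, abs_of_nonneg (hw₀ _),
      ← Finset.mul_sum, hw₁, mul_one, le_refl]
end

section
/- Let M be the 3×4 matrix with columns (1,1,1), (1,−1,−1), (−1,1,−1), (−1,−1,1), and let b = (−1,−1,−1). Then the minimum of ‖t‖₁ over nonnegative t ∈ ℝ⁴ with M t = b equals 3 = √3 · ‖b‖₂. -/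
/-!
Feasibility is witnessed by `t = (0, 1, 1, 1)`. Optimality is weak LP duality: the dual vector
`y = (-1, -1, -1)` satisfies `yᵀ M = (-3, 1, 1, 1) ≤ 1` componentwise, so every feasible `t` has
`‖t‖₁ ≥ y ⬝ b = 3`.
-/

open Matrix

theorem dotProduct_le_sum_of_vecMul_le_one {m n : Type*} [Fintype m] [Fintype n]
    (M : Matrix m n ℝ) {t : n → ℝ} {y : m → ℝ} (ht : ∀ j, 0 ≤ t j) (hy : ∀ j, (y ᵥ* M) j ≤ 1) :
    y ⬝ᵥ (M *ᵥ t) ≤ ∑ j, t j := by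
  rw [dotProduct_mulVec]
  exact Finset.sum_le_sum fun j _ => mul_le_of_le_one_left (ht j) (hy j)

/-- For the 3×4 sign matrix with columns (1,1,1), (1,−1,−1), (−1,1,−1), (−1,−1,1) and
b = (−1,−1,−1), the minimum of ‖t‖₁ over nonnegative t with M t = b equals 3 = √3·‖b‖₂. -/
theorem stmt_6 :
    let M : Matrix (Fin 3) (Fin 4) ℝ :=
      Matrix.of ![![1, 1, -1, -1], ![1, -1, 1, -1], ![1, -1, -1, 1]]
    let b : Fin 3 → ℝ := ![-1, -1, -1]
    IsLeast {x : ℝ | ∃ t : Fin 4 → ℝ,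
        (∀ j, 0 ≤ t j) ∧ M.mulVec t = b ∧ x = ∑ j, |t j|} 3 ∧
    (3 : ℝ) = Real.sqrt 3 * Real.sqrt (∑ i, (b i) ^ 2) := by
  intro M b
  refine ⟨⟨⟨![0, 1, 1, 1], ?_, ?_, ?_⟩, ?_⟩, ?_⟩
  · intro j
    fin_cases j <;> norm_num
  · ext i
    fin_cases i <;> simp [M, b, mulVec, dotProduct, Fin.sum_univ_four]
  · simp [Fin.sum_univ_four]
    norm_num
  · rintro x ⟨t, ht, hMt, rfl⟩
    have hdual : ∀ j, (![-1, -1, -1] ᵥ* M) j ≤ 1 := by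
      intro j
      fin_cases j <;> simp [M, vecMul, dotProduct, Fin.sum_univ_three]
      norm_num
    have hbound := dotProduct_le_sum_of_vecMul_le_one M ht hdual
    rw [hMt] at hbound
    simp only [abs_of_nonneg (ht _)]
    simp [b, dotProduct, Fin.sum_univ_three] at hbound
    linarith
  · have hb : ∑ i, b i ^ 2 = 3 := by
      simp [b, Fin.sum_univ_three]
      norm_num
    rw [hb, Real.mul_self_sqrt (by norm_num)]
end

section
/- Let M be the 3×4 matrix with columns (1,1,1), (1,−1,−1), (−1,1,−1), (−1,−1,1). Then for every b ∈ ℝ³ there exists a nonnegative t ∈ ℝ⁴ with M t = b and ‖t‖₁ ≤ √3 ‖b‖₂, and this constant √3 cannot be improved. -/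
/-!
The rows of `M` are orthogonal with `M Mᵀ = 4 I` and its columns sum to zero, so for every
`μ` the vector `t = (μ 𝟙 + Mᵀ b) / 4` solves `M t = b` with `∑ t = μ`. The least `μ` making
`t` nonnegative is `max_j ⟪-M_j, b⟫` over the columns `M_j`, which Cauchy–Schwarz bounds by
`√3 ‖b‖₂` since each column has norm `√3`.

For sharpness, `y = (1, 1, -1)` satisfies `yᵀ M ≤ 𝟙`, so by weak LP duality every nonnegative
solution of `M t = y` has `‖t‖₁ ≥ ⟪y, M t⟫ = ‖y‖₂² = √3 ‖y‖₂`.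
-/

open Finset

namespace Matrix

variable {m n : Type*} [Fintype m] [Fintype n]

theorem dotProduct_mulVec_le_sum_of_vecMul_le_one {M : Matrix m n ℝ} {y : m → ℝ}
    (hy : ∀ j, (y ᵥ* M) j ≤ 1) {t : n → ℝ} (ht : ∀ j, 0 ≤ t j) :
    y ⬝ᵥ M *ᵥ t ≤ ∑ j, t j := by
  rw [dotProduct_mulVec, dotProduct]
  exact sum_le_sum fun j _ => mul_le_of_le_one_left (ht j) (hy j)

theorem sqrt_sum_sq_le_of_vecMul_le_one {M : Matrix m n ℝ} {y : m → ℝ}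
    (hy : ∀ j, (y ᵥ* M) j ≤ 1) (hy0 : y ≠ 0) {t : n → ℝ} (ht : ∀ j, 0 ≤ t j)
    (hMt : M *ᵥ t = y) {c : ℝ} (hc : ∑ j, t j ≤ c * √(∑ i, y i ^ 2)) :
    √(∑ i, y i ^ 2) ≤ c := by
  obtain ⟨i, hi⟩ := Function.ne_iff.1 hy0
  have hpos : 0 < √(∑ i, y i ^ 2) :=
    Real.sqrt_pos.2 <| sum_pos' (fun i _ => sq_nonneg (y i)) ⟨i, mem_univ i, sq_pos_of_ne_zero hi⟩
  refine le_of_mul_le_mul_right ?_ hpos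
  calc √(∑ i, y i ^ 2) * √(∑ i, y i ^ 2) = y ⬝ᵥ M *ᵥ t := by
        rw [Real.mul_self_sqrt (by positivity), hMt, dotProduct]; simp only [sq]
    _ ≤ ∑ j, t j := dotProduct_mulVec_le_sum_of_vecMul_le_one hy ht
    _ ≤ c * √(∑ i, y i ^ 2) := hc

theorem dotProduct_le_sqrt_card_mul_sqrt_sum_sq {σ : m → ℝ} (hσ : ∀ i, |σ i| ≤ 1) (b : m → ℝ) :
    σ ⬝ᵥ b ≤ √(Fintype.card m) * √(∑ i, b i ^ 2) := by
  have hσ2 : ∑ i, σ i ^ 2 ≤ Fintype.card m := by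
    simpa using sum_le_sum fun i (_ : i ∈ univ) => (sq_le_one_iff_abs_le_one (σ i)).2 (hσ i)
  calc σ ⬝ᵥ b ≤ √(∑ i, σ i ^ 2) * √(∑ i, b i ^ 2) := Real.sum_mul_le_sqrt_mul_sqrt _ _ _
    _ ≤ √(Fintype.card m) * √(∑ i, b i ^ 2) := by gcongr

theorem mulVec_smul_add_transpose_mulVec [DecidableEq m] {M : Matrix m n ℝ}
    (hMMt : M * Mᵀ = (Fintype.card n : ℝ) • 1) (hM1 : M *ᵥ 1 = 0) [Nonempty n]
    (μ : ℝ) (b : m → ℝ) :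
    M *ᵥ ((Fintype.card n : ℝ)⁻¹ • (μ • 1 + Mᵀ *ᵥ b)) = b := by
  rw [mulVec_smul, mulVec_add, mulVec_smul, hM1, mulVec_mulVec, hMMt, smul_mulVec, one_mulVec,
    smul_zero, zero_add, smul_smul, inv_mul_cancel₀ (by positivity), one_smul]

theorem sum_smul_add_transpose_mulVec {M : Matrix m n ℝ} (hM1 : M *ᵥ 1 = 0) [Nonempty n]
    (μ : ℝ) (b : m → ℝ) :
    ∑ j, ((Fintype.card n : ℝ)⁻¹ • (μ • 1 + Mᵀ *ᵥ b)) j = μ := by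
  have hcol : ∑ j, (Mᵀ *ᵥ b) j = 0 := by
    rw [← dotProduct_one, mulVec_transpose, ← dotProduct_mulVec, hM1, dotProduct_zero]
  simp only [Pi.smul_apply, Pi.add_apply, Pi.one_apply, smul_eq_mul, ← mul_sum, sum_add_distrib,
    hcol, sum_const, card_univ, nsmul_eq_mul, mul_one, add_zero]
  field_simp

theorem exists_nonneg_mulVec_eq_sum_le [DecidableEq m] [Nonempty n] {M : Matrix m n ℝ}
    (hMMt : M * Mᵀ = (Fintype.card n : ℝ) • 1) (hM1 : M *ᵥ 1 = 0) (hM : ∀ i j, |M i j| ≤ 1)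
    (b : m → ℝ) :
    ∃ t : n → ℝ, (∀ j, 0 ≤ t j) ∧ M *ᵥ t = b ∧
      ∑ j, t j ≤ √(Fintype.card m) * √(∑ i, b i ^ 2) := by
  set μ := ⨆ j, -(Mᵀ *ᵥ b) j with hμ
  refine ⟨(Fintype.card n : ℝ)⁻¹ • (μ • 1 + Mᵀ *ᵥ b), fun j => ?_,
    mulVec_smul_add_transpose_mulVec hMMt hM1 μ b, ?_⟩
  · have : -(Mᵀ *ᵥ b) j ≤ μ := le_ciSup (Finite.bddAbove_range fun j => -(Mᵀ *ᵥ b) j) j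
    simp only [Pi.smul_apply, Pi.add_apply, Pi.one_apply, smul_eq_mul, mul_one]
    exact mul_nonneg (by positivity) (by linarith)
  · obtain ⟨j, hj⟩ := exists_eq_ciSup_of_finite (f := fun j => -(Mᵀ *ᵥ b) j)
    have hcol : -(Mᵀ *ᵥ b) j = (fun i => -M i j) ⬝ᵥ b := by
      simp [mulVec, dotProduct]
    rw [sum_smul_add_transpose_mulVec hM1, hμ, ← hj, hcol]
    exact dotProduct_le_sqrt_card_mul_sqrt_sum_sq (fun i => (abs_neg (M i j)).trans_le (hM i j)) b

end Matrix

open Matrix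

def zzSignMatrix : Matrix (Fin 3) (Fin 4) ℝ :=
  Matrix.of ![![1, 1, -1, -1], ![1, -1, 1, -1], ![1, -1, -1, 1]]

theorem zzSignMatrix_mul_transpose :
    zzSignMatrix * zzSignMatrixᵀ = (Fintype.card (Fin 4) : ℝ) • 1 := by
  ext i k
  fin_cases i <;> fin_cases k <;> simp [zzSignMatrix, mul_apply, Fin.sum_univ_four] <;> norm_num

theorem zzSignMatrix_mulVec_one : zzSignMatrix *ᵥ 1 = 0 := by
  ext i
  fin_cases i <;> simp [zzSignMatrix, mulVec, dotProduct, Fin.sum_univ_four]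

theorem abs_zzSignMatrix_le_one (i : Fin 3) (j : Fin 4) : |zzSignMatrix i j| ≤ 1 := by
  fin_cases i <;> fin_cases j <;> simp [zzSignMatrix]

theorem vecMul_zzSignMatrix_le_one (j : Fin 4) : (![1, 1, -1] ᵥ* zzSignMatrix) j ≤ 1 := by
  fin_cases j <;> simp [zzSignMatrix, vecMul, dotProduct, Fin.sum_univ_three]; norm_num

/-- For the 3-qubit ZZ sign matrix M (columns (1,1,1), (1,−1,−1), (−1,1,−1), (−1,−1,1)),
every b ∈ ℝ³ admits a nonnegative t with M t = b and ‖t‖₁ ≤ √3 ‖b‖₂, and the constant √3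
cannot be improved. -/
theorem stmt_7 :
    let M : Matrix (Fin 3) (Fin 4) ℝ :=
      Matrix.of ![![1, 1, -1, -1], ![1, -1, 1, -1], ![1, -1, -1, 1]]
    (∀ b : Fin 3 → ℝ, ∃ t : Fin 4 → ℝ, (∀ j, 0 ≤ t j) ∧ M.mulVec t = b ∧
        (∑ j, |t j|) ≤ Real.sqrt 3 * Real.sqrt (∑ i, (b i) ^ 2)) ∧
    (∀ c : ℝ, (∀ b : Fin 3 → ℝ, ∃ t : Fin 4 → ℝ, (∀ j, 0 ≤ t j) ∧ M.mulVec t = b ∧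
        (∑ j, |t j|) ≤ c * Real.sqrt (∑ i, (b i) ^ 2)) → Real.sqrt 3 ≤ c) := by
  intro M
  refine ⟨fun b => ?_, fun c hc => ?_⟩
  · obtain ⟨t, ht, hMt, hsum⟩ := exists_nonneg_mulVec_eq_sum_le
      zzSignMatrix_mul_transpose zzSignMatrix_mulVec_one abs_zzSignMatrix_le_one b
    refine ⟨t, ht, hMt, ?_⟩
    simp_rw [abs_of_nonneg (ht _)]
    simpa using hsum
  · obtain ⟨t, ht, hMt, hsum⟩ := hc ![1, 1, -1]
    simp_rw [abs_of_nonneg (ht _)] at hsum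
    have hnorm : ∑ i, (![1, 1, -1] : Fin 3 → ℝ) i ^ 2 = 3 := by
      simp [Fin.sum_univ_three]; norm_num
    rw [← hnorm]
    exact sqrt_sum_sq_le_of_vecMul_le_one vecMul_zzSignMatrix_le_one (by simp) ht hMt hsum
end

section
/- For n qubits, let M(n) be the n(n−1)/2 × 2^{n−1} matrix whose columns are indexed by sign vectors s ∈ {±1}ⁿ with s₁ = 1 and whose entry in row (i,j) (i<j) is sᵢ sⱼ. Then the columns of M(n) span ℝ^{n(n−1)/2} for all n ≥ 2. -/
/-!
Encode a sign vector as `σ : α → ℤˣ`; its column `p ↦ σ p.1 σ p.2` is multiplicative in `σ` and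
invariant under `σ ↦ -σ`, so the normalisation `s₁ = 1` costs nothing and every sign vector gives
a column. Let `uᵢ` be the column of the vector flipping only qubit `i`. At a pair `(a, b)`,
`(1 - uᵢ)/2` is the indicator that exactly one of `a, b` equals `i`, so for `i < j` the product
`(1 - uᵢ)(1 - uⱼ)/4 = (1 - uᵢ - uⱼ + uᵢuⱼ)/4` is the standard basis vector at `(i, j)`, a
combination of four columns.
-/

variable {α : Type*}

def zzColumn [LT α] (σ : α → ℤˣ) : {p : α × α // p.1 < p.2} → ℝ :=
  fun p => ((σ p.1.1 * σ p.1.2 : ℤˣ) : ℤ)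

def signColumns [LT α] (z : α) : Set ({p : α × α // p.1 < p.2} → ℝ) :=
  {c | ∃ s : α → Bool, s z = true ∧
    c = fun p => (if s p.1.1 then (1 : ℝ) else -1) * (if s p.1.2 then (1 : ℝ) else -1)}

section LT
variable [LT α]

@[simp] lemma zzColumn_one : zzColumn (1 : α → ℤˣ) = 1 := by
  ext; simp [zzColumn]

lemma zzColumn_mul (σ τ : α → ℤˣ) : zzColumn (σ * τ) = zzColumn σ * zzColumn τ := by
  ext p; simp only [zzColumn, Pi.mul_apply, mul_mul_mul_comm, Units.val_mul, Int.cast_mul]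

lemma zzColumn_neg (σ : α → ℤˣ) : zzColumn (-σ) = zzColumn σ := by
  ext p; simp only [zzColumn, Pi.neg_apply, neg_mul_neg]

lemma zzColumn_mem_signColumns_of_eq_one {σ : α → ℤˣ} {z : α} (hz : σ z = 1) :
    zzColumn σ ∈ signColumns z := by
  refine ⟨fun x => σ x = 1, by simpa using hz, ?_⟩
  have hsign : ∀ x, (if σ x = 1 then (1 : ℝ) else -1) = ((σ x : ℤ) : ℝ) := by
    intro x; rcases Int.units_eq_one_or (σ x) with h | h <;> simp [h]
  ext p; simp [zzColumn, hsign]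

lemma zzColumn_mem_signColumns (σ : α → ℤˣ) (z : α) :
    zzColumn σ ∈ signColumns z := by
  rcases Int.units_eq_one_or (σ z) with h | h
  · exact zzColumn_mem_signColumns_of_eq_one h
  · rw [← zzColumn_neg]; exact zzColumn_mem_signColumns_of_eq_one (by simp [h])

end LT

lemma one_sub_zzColumn_mul_one_sub_zzColumn [Preorder α] [DecidableEq α] {i j : α} (hij : i < j) :
    (1 - zzColumn (Pi.mulSingle i (-1))) * (1 - zzColumn (Pi.mulSingle j (-1))) =
      (4 : ℝ) • Pi.single (⟨(i, j), hij⟩ : {p : α × α // p.1 < p.2}) 1 := by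
  ext ⟨⟨a, b⟩, hab⟩
  simp only [zzColumn, Pi.mul_apply, Pi.sub_apply, Pi.one_apply, Pi.smul_apply, Pi.single_apply,
    Pi.mulSingle_apply, Subtype.mk.injEq, Prod.mk.injEq]
  by_cases hai : a = i <;> by_cases hbi : b = i <;> by_cases haj : a = j <;> by_cases hbj : b = j <;>
    subst_vars <;> simp_all [lt_asymm]
  norm_num

theorem span_signColumns_eq_top [Preorder α] [Finite α] (z : α) :
    Submodule.span ℝ (signColumns z) = ⊤ := by
  classical
  have hcol (σ : α → ℤˣ) : zzColumn σ ∈ Submodule.span ℝ (signColumns z) :=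
    Submodule.subset_span (zzColumn_mem_signColumns σ z)
  rw [eq_top_iff, ← (Pi.basisFun ℝ _).span_eq, Submodule.span_le]
  rintro _ ⟨⟨⟨i, j⟩, hij⟩, rfl⟩
  set u : α → ℤˣ := Pi.mulSingle i (-1)
  set v : α → ℤˣ := Pi.mulSingle j (-1)
  have hexpand : Pi.basisFun ℝ _ ⟨(i, j), hij⟩ =
      (4 : ℝ)⁻¹ • (zzColumn 1 - zzColumn u - zzColumn v + zzColumn (u * v)) := by
    rw [Pi.basisFun_apply, ← inv_smul_smul₀ (four_ne_zero' ℝ) (Pi.single _ _),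
      ← one_sub_zzColumn_mul_one_sub_zzColumn hij, zzColumn_one, zzColumn_mul]
    congr 1
    ring
  rw [hexpand]
  exact Submodule.smul_mem _ _ <|
    add_mem (sub_mem (sub_mem (hcol 1) (hcol u)) (hcol v)) (hcol (u * v))

/-- The columns of the n-qubit ZZ DAQC sign matrix M(n) — indexed by sign vectors
s ∈ {±1}ⁿ with s₁ = 1, with entry sᵢsⱼ in row (i,j), i < j — span ℝ^{n(n−1)/2}
(here realized as the functions on the set of ordered pairs). -/
theorem stmt_8 (n : ℕ) (hn : 2 ≤ n) :
    Submodule.span ℝ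
      {c : {p : Fin n × Fin n // p.1 < p.2} → ℝ |
        ∃ s : Fin n → Bool, s ⟨0, by omega⟩ = true ∧
          c = fun p => (if s p.1.1 then (1 : ℝ) else -1) *
                        (if s p.1.2 then (1 : ℝ) else -1)} = ⊤ :=
  span_signColumns_eq_top _
end

section
/- Let M(n) be the ZZ sign matrix for n ≥ 4, decomposed in block form M(n) = [[L, −L],[M(n−1), M(n−1)]] where L records the signs of couplings involving qubit n. Then for any problem b = (β, c) with β ∈ ℝ^{n−1} and c ∈ ℝ^{(n−1)(n−2)/2}, the minimal ‖t‖₁ with M(n)t = b, t ≥ 0, is at most the minimal ‖t'‖₁ with M(n−1)t' = c, t' ≥ 0, plus ‖β‖₁. -/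
/-!
Write a configuration on `n + 1` sites as a configuration `s` on the first `n` sites together
with the spin `x` at the new site. Put half of `t' s` on each of the two extensions of `s`: this
reproduces every old coupling and costs `∑ t'`. Each new coupling `β i` is realised by spending
`|β i|` uniformly on the configurations whose spins at `i` and at the new site multiply to
`sign (β i)`. By orthogonality of spins, `∑ₛ σᵢ(s) σⱼ(s) = 0` for `i ≠ j` (flip the spin at a
site other than the pinned one), this extra mass contributes nothing to the other couplings,
and it costs `‖β‖₁` in total.
-/

open Finset

def spin (x : Bool) : ℝ := if x then 1 else -1

@[simp] lemma spin_true : spin true = 1 := rfl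
@[simp] lemma spin_false : spin false = -1 := rfl

lemma spin_mul_self (x : Bool) : spin x * spin x = 1 := by cases x <;> norm_num

@[simp] lemma spin_not (x : Bool) : spin (!x) = -spin x := by cases x <;> norm_num

lemma abs_spin (x : Bool) : |spin x| = 1 := by cases x <;> norm_num

abbrev SpinConfig {ι : Type*} (i₀ : ι) := {s : ι → Bool // s i₀ = true}

section Orthogonality

variable {ι : Type*} [DecidableEq ι]

def SpinConfig.flip {i₀ : ι} (j : ι) (hj : j ≠ i₀) (s : SpinConfig i₀) : SpinConfig i₀ :=
  ⟨Function.update s.1 j (!s.1 j), by rw [Function.update_of_ne hj.symm]; exact s.2⟩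

lemma SpinConfig.flip_involutive {i₀ : ι} (j : ι) (hj : j ≠ i₀) :
    Function.Involutive (SpinConfig.flip j hj) := fun s =>
  Subtype.ext <| by simp [SpinConfig.flip]

variable [Fintype ι]

lemma sum_spin_mul_spin_of_ne_of_ne {i₀ i j : ι} (hij : i ≠ j) (hj : j ≠ i₀) :
    ∑ s : SpinConfig i₀, spin (s.1 i) * spin (s.1 j) = 0 := by
  have hflip : ∑ s : SpinConfig i₀, spin (s.1 i) * spin (s.1 j) =
      ∑ s : SpinConfig i₀, -(spin (s.1 i) * spin (s.1 j)) :=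
    Fintype.sum_equiv (SpinConfig.flip_involutive j hj).toPerm _ _ fun s => by
      simp [SpinConfig.flip, Function.update_of_ne hij]
  rw [sum_neg_distrib] at hflip
  linarith

lemma sum_spin_mul_spin (i₀ i j : ι) :
    ∑ s : SpinConfig i₀, spin (s.1 i) * spin (s.1 j) =
      if i = j then (Fintype.card (SpinConfig i₀) : ℝ) else 0 := by
  split_ifs with hij
  · simp only [hij, spin_mul_self, sum_const, card_univ, nsmul_eq_mul, mul_one]
  by_cases hj : j = i₀
  · rw [← sum_spin_mul_spin_of_ne_of_ne (Ne.symm hij) (hj ▸ hij)]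
    exact sum_congr rfl fun _ _ => mul_comm _ _
  · exact sum_spin_mul_spin_of_ne_of_ne hij hj

end Orthogonality

def coupling {ι : Type*} [Fintype ι] [DecidableEq ι] {i₀ : ι} (t : SpinConfig i₀ → ℝ)
    (i j : ι) : ℝ :=
  ∑ s, t s * (spin (s.1 i) * spin (s.1 j))

namespace SpinConfig

variable {n : ℕ} {i₀ : Fin n}

def init (s : SpinConfig i₀.castSucc) : SpinConfig i₀ := ⟨Fin.init s.1, s.2⟩

def snoc (s : SpinConfig i₀) (x : Bool) : SpinConfig i₀.castSucc :=
  ⟨Fin.snoc s.1 x, by simpa using s.2⟩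

@[simp] lemma snoc_apply_castSucc (s : SpinConfig i₀) (x : Bool) (i : Fin n) :
    (s.snoc x).1 i.castSucc = s.1 i := by simp [snoc]

@[simp] lemma snoc_apply_last (s : SpinConfig i₀) (x : Bool) :
    (s.snoc x).1 (Fin.last n) = x := by simp [snoc]

@[simp] lemma init_snoc (s : SpinConfig i₀) (x : Bool) : (s.snoc x).init = s :=
  Subtype.ext (by simp [snoc, init])

def snocEquiv : SpinConfig i₀ × Bool ≃ SpinConfig i₀.castSucc where
  toFun p := p.1.snoc p.2
  invFun s := (s.init, s.1 (Fin.last n))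
  left_inv p := by simp
  right_inv s := Subtype.ext (Fin.snoc_init_self s.1)

lemma sum_eq_sum_sum_snoc {M : Type*} [AddCommMonoid M] (f : SpinConfig i₀.castSucc → M) :
    ∑ s, f s = ∑ s : SpinConfig i₀, ∑ x : Bool, f (s.snoc x) := by
  rw [← Fintype.sum_prod_type']
  exact (Fintype.sum_equiv snocEquiv _ _ fun _ => rfl).symm

end SpinConfig

section Extension

variable {n : ℕ} {i₀ : Fin n} (t' : SpinConfig i₀ → ℝ) (β : Fin n → ℝ)

/-- Half of `t'` on each extension plus, for each `i`, mass `|β i| / N` on every configuration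
with `σᵢ σ = sign (β i)`, rewritten via `[σᵢ σ = sign (β i)] = (1 + sign (β i) σᵢ σ) / 2`. -/
noncomputable def extendSolution (s : SpinConfig i₀.castSucc) : ℝ :=
  t' s.init / 2 + (∑ i, |β i| + spin (s.1 (Fin.last n)) * ∑ i, β i * spin (s.1 i.castSucc)) /
    (2 * Fintype.card (SpinConfig i₀))

local notation "N" => (Fintype.card (SpinConfig i₀) : ℝ)

lemma card_spinConfig_pos : 0 < N := by
  exact_mod_cast Fintype.card_pos_iff.mpr ⟨(⟨fun _ => true, rfl⟩ : SpinConfig i₀)⟩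

lemma extendSolution_nonneg (ht' : ∀ s, 0 ≤ t' s) (s : SpinConfig i₀.castSucc) :
    0 ≤ extendSolution t' β s := by
  have hβ : |spin (s.1 (Fin.last n)) * ∑ i, β i * spin (s.1 i.castSucc)| ≤ ∑ i, |β i| := by
    rw [abs_mul, abs_spin, one_mul]
    refine (abs_sum_le_sum_abs _ _).trans_eq (sum_congr rfl fun i _ => ?_)
    rw [abs_mul, abs_spin, mul_one]
  have := neg_abs_le (spin (s.1 (Fin.last n)) * ∑ i, β i * spin (s.1 i.castSucc))
  exact add_nonneg (by linarith [ht' s.init]) (div_nonneg (by linarith) (by positivity))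

lemma extendSolution_snoc (s : SpinConfig i₀) (x : Bool) :
    extendSolution t' β (s.snoc x) =
      t' s / 2 + (∑ i, |β i| + spin x * ∑ i, β i * spin (s.1 i)) / (2 * N) := by
  simp [extendSolution]

lemma sum_bool_extendSolution_snoc (s : SpinConfig i₀) :
    ∑ x : Bool, extendSolution t' β (s.snoc x) = t' s + (∑ i, |β i|) / N := by
  simp only [Fintype.sum_bool, extendSolution_snoc, spin_true, spin_false]
  field_simp
  ring

lemma sum_bool_extendSolution_snoc_mul_spin (s : SpinConfig i₀) :
    ∑ x : Bool, extendSolution t' β (s.snoc x) * spin x = (∑ i, β i * spin (s.1 i)) / N := by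
  simp only [Fintype.sum_bool, extendSolution_snoc, spin_true, spin_false]
  field_simp
  ring

lemma sum_extendSolution : ∑ s, extendSolution t' β s = ∑ s, t' s + ∑ i, |β i| := by
  simp only [SpinConfig.sum_eq_sum_sum_snoc, sum_bool_extendSolution_snoc, sum_add_distrib,
    sum_const, card_univ, nsmul_eq_mul]
  field_simp [card_spinConfig_pos.ne']

lemma coupling_extendSolution_castSucc {i j : Fin n} (hij : i ≠ j) :
    coupling (extendSolution t' β) i.castSucc j.castSucc = coupling t' i j := by
  have hsum := sum_spin_mul_spin i₀ i j
  rw [if_neg hij] at hsum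
  calc coupling (extendSolution t' β) i.castSucc j.castSucc
      = ∑ s : SpinConfig i₀, (t' s + (∑ k, |β k|) / N) * (spin (s.1 i) * spin (s.1 j)) := by
        simp only [coupling, SpinConfig.sum_eq_sum_sum_snoc, SpinConfig.snoc_apply_castSucc,
          ← sum_mul, sum_bool_extendSolution_snoc]
    _ = coupling t' i j +
          (∑ k, |β k|) / N * ∑ s : SpinConfig i₀, spin (s.1 i) * spin (s.1 j) := by
        simp only [coupling, add_mul, sum_add_distrib, mul_sum]
    _ = coupling t' i j := by rw [hsum, mul_zero, add_zero]

lemma coupling_extendSolution_last (i : Fin n) :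
    coupling (extendSolution t' β) i.castSucc (Fin.last n) = β i := by
  calc coupling (extendSolution t' β) i.castSucc (Fin.last n)
      = ∑ s : SpinConfig i₀, spin (s.1 i) * (∑ k, β k * spin (s.1 k)) / N := by
        simp only [coupling, SpinConfig.sum_eq_sum_sum_snoc, SpinConfig.snoc_apply_castSucc,
          SpinConfig.snoc_apply_last, mul_left_comm _ (spin _), ← mul_sum,
          sum_bool_extendSolution_snoc_mul_spin, mul_div_assoc]
    _ = (∑ k, β k * ∑ s : SpinConfig i₀, spin (s.1 i) * spin (s.1 k)) / N := by
        simp only [← sum_div, mul_sum]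
        rw [sum_comm]
        simp only [mul_left_comm]
    _ = β i := by
        simp only [sum_spin_mul_spin, mul_ite, mul_zero, sum_ite_eq, mem_univ, if_true]
        field_simp [card_spinConfig_pos.ne']

end Extension

/-- Recursive block structure of the ZZ sign matrix: for n+1 ≥ 4 qubits, a problem
b = (β, c) (with β the couplings of the last qubit and c the couplings of the first n
qubits) can be solved with total time at most that of any solution t' of the n-qubit
problem M(n) t' = c plus ‖β‖₁.  Hence the minimal ‖t‖₁ for M(n+1) t = b is at most the
minimal ‖t'‖₁ for M(n) t' = c plus ‖β‖₁. -/
theorem stmt_13 (n : ℕ) (hn : 3 ≤ n)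
    (b : {p : Fin (n + 1) × Fin (n + 1) // p.1 < p.2} → ℝ)
    (t' : {s : Fin n → Bool // s ⟨0, by omega⟩ = true} → ℝ)
    (ht' : ∀ s, 0 ≤ t' s)
    (hc : ∀ p : {p : Fin n × Fin n // p.1 < p.2},
      ∑ s : {s : Fin n → Bool // s ⟨0, by omega⟩ = true},
        t' s * ((if s.1 p.1.1 then (1 : ℝ) else -1) *
                (if s.1 p.1.2 then (1 : ℝ) else -1))
        = b ⟨(p.1.1.castSucc, p.1.2.castSucc), Fin.castSucc_lt_castSucc_iff.mpr p.2⟩) :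
    ∃ t : {s : Fin (n + 1) → Bool // s ⟨0, by omega⟩ = true} → ℝ,
      (∀ s, 0 ≤ t s) ∧
      (∀ p : {p : Fin (n + 1) × Fin (n + 1) // p.1 < p.2},
        ∑ s : {s : Fin (n + 1) → Bool // s ⟨0, by omega⟩ = true},
          t s * ((if s.1 p.1.1 then (1 : ℝ) else -1) *
                 (if s.1 p.1.2 then (1 : ℝ) else -1)) = b p) ∧
      (∑ s, t s) ≤ (∑ s, t' s) +
        ∑ i : Fin n, |b ⟨(i.castSucc, Fin.last n), Fin.castSucc_lt_last i⟩| := by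
  set β : Fin n → ℝ := fun i => b ⟨(i.castSucc, Fin.last n), Fin.castSucc_lt_last i⟩
  refine ⟨extendSolution t' β, extendSolution_nonneg t' β ht', ?_,
    (sum_extendSolution t' β).le⟩
  rintro ⟨⟨a, c⟩, hac⟩
  obtain ⟨i, rfl⟩ := Fin.exists_castSucc_eq.mpr (Fin.ne_last_of_lt hac)
  cases c using Fin.lastCases with
  | last => exact coupling_extendSolution_last t' β i
  | cast j =>
    have hij : i < j := Fin.castSucc_lt_castSucc_iff.mp hac
    exact (coupling_extendSolution_castSucc t' β hij.ne).trans (hc ⟨(i, j), hij⟩)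
end

section
/- For the 2-qubit general two-body case: let M be the 9×16 matrix whose columns, indexed by pairs of single-qubit Pauli conjugations, have entries in {−1,+1} recording the sign flips of the nine couplings σ^μ⊗σ^ν (μ,ν ∈ {x,y,z}) under conjugation by Pauli gates P⊗Q (P,Q ∈ {I,X,Y,Z}); specifically entry ((μ,ν),(P,Q)) = ε(P,μ)·ε(Q,ν) where ε(P,μ)=+1 if P=I or P=σ^μ and −1 otherwise. Then the columns of M span ℝ⁹. -/
/-!
The sign vectors `ε(·, μ)`, `μ ∈ {x, y, z}`, seen as functions of the Pauli gate `P`, are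
orthogonal of squared norm 4, and the columns of `M` are their tensor products, which are
therefore orthogonal as well. Hence each standard basis vector `e_{μν}` is `1/16` times the
sum of the columns weighted by their `(μ, ν)` entries, and the columns span `ℝ⁹`.
-/

open Submodule Set

section OrthogonalFamily

variable {K ι ι' κ κ' : Type*} [Field K] [Fintype κ] [Fintype κ']
  [DecidableEq ι] [DecidableEq ι']

theorem single_eq_smul_sum_of_sum_mul_eq {v : κ → ι → K} {c : K} (hc : c ≠ 0)
    (h : ∀ a b, ∑ k, v k a * v k b = if a = b then c else 0) (a : ι) :
    Pi.single a 1 = c⁻¹ • ∑ k, v k a • v k := by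
  funext b
  simp only [Pi.smul_apply, Finset.sum_apply, smul_eq_mul, h, Pi.single_apply, eq_comm]
  split_ifs <;> simp [hc]

theorem span_range_eq_top_of_sum_mul_eq [Finite ι] {v : κ → ι → K} {c : K} (hc : c ≠ 0)
    (h : ∀ a b, ∑ k, v k a * v k b = if a = b then c else 0) :
    span K (range v) = ⊤ := by
  have hsingle : ∀ a, Pi.single a 1 ∈ span K (range v) := fun a => by
    rw [single_eq_smul_sum_of_sum_mul_eq hc h a]
    exact smul_mem _ _ (sum_mem fun k _ => smul_mem _ _ (subset_span (mem_range_self k)))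
  rw [eq_top_iff, ← (Pi.basisFun K ι).span_eq, span_le, range_subset_iff]
  simpa using hsingle

theorem sum_mul_eq_of_prod {v : κ → ι → K} {u : κ' → ι' → K} {c d : K}
    (hv : ∀ a b, ∑ k, v k a * v k b = if a = b then c else 0)
    (hu : ∀ a b, ∑ l, u l a * u l b = if a = b then d else 0) (a b : ι × ι') :
    ∑ kl : κ × κ', v kl.1 a.1 * u kl.2 a.2 * (v kl.1 b.1 * u kl.2 b.2) =
      if a = b then c * d else 0 := by
  have hfactor : ∑ kl : κ × κ', v kl.1 a.1 * u kl.2 a.2 * (v kl.1 b.1 * u kl.2 b.2) =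
      (∑ k, v k a.1 * v k b.1) * ∑ l, u l a.2 * u l b.2 := by
    rw [Finset.sum_mul_sum, Fintype.sum_prod_type]
    exact Finset.sum_congr rfl fun k _ => Finset.sum_congr rfl fun l _ => by ring
  rw [hfactor, hv, hu, ite_zero_mul_ite_zero]
  simp only [Prod.ext_iff]

end OrthogonalFamily

/-- Two-qubit general DAQC sign matrix: rows indexed by (μ,ν) ∈ {x,y,z}² (couplings
σ^μ⊗σ^ν), columns indexed by (P,Q) ∈ {I,X,Y,Z}² (Pauli conjugations), with entry
ε(P,μ)·ε(Q,ν), where ε(P,μ) = +1 if P = I or P = σ^μ and −1 otherwise (Paulis encoded as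
Fin 4 with I = 0 and σ^μ = μ+1).  The 16 columns span ℝ⁹. -/
theorem stmt_14 :
    let eps : Fin 4 → Fin 3 → ℝ := fun P μ => if P = 0 ∨ P = μ.succ then 1 else -1
    Submodule.span ℝ
      {c : Fin 3 × Fin 3 → ℝ |
        ∃ PQ : Fin 4 × Fin 4, c = fun μν => eps PQ.1 μν.1 * eps PQ.2 μν.2} = ⊤ := by
  intro eps
  have heps : ∀ μ ν, ∑ P, eps P μ * eps P ν = if μ = ν then 4 else 0 := by
    intro μ ν
    fin_cases μ <;> fin_cases ν <;> simp +decide [Fin.sum_univ_four, eps] <;> norm_num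
  have hcols : {c : Fin 3 × Fin 3 → ℝ |
      ∃ PQ : Fin 4 × Fin 4, c = fun μν => eps PQ.1 μν.1 * eps PQ.2 μν.2} =
      range fun PQ : Fin 4 × Fin 4 => fun μν : Fin 3 × Fin 3 => eps PQ.1 μν.1 * eps PQ.2 μν.2 := by
    ext c
    simp only [mem_ofPred_eq, mem_range, eq_comm]
  rw [hcols]
  exact span_range_eq_top_of_sum_mul_eq (by norm_num) (sum_mul_eq_of_prod heps heps)
end

section
/- With M the 9×16 two-qubit DAQC sign matrix (entries ε(P,μ)ε(Q,ν) as above), let b ∈ ℝ⁹ be the vector with b_{xx} = b_{yy} = b_{zz} = −1 and all other entries 0. Then the minimum of ‖t‖₁ over nonnegative t with M t = b equals 3 = √3‖b‖₂. -/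
/-!
The optimum is a linear program. The weights `t = 1/4` on the twelve pairs `(P, Q)` with
`P ≠ Q` are feasible because the sign columns `ε(·, μ)` sum to zero and are mutually
orthogonal, and they cost `3`. Conversely `b` itself is a dual certificate: for every pair,
`-∑ μ, ε(P, μ) ε(Q, μ) ≤ 1`, so weak duality gives `‖t‖₁ ≥ ⟪b, b⟫ = 3`.
-/

open Finset

theorem sum_mul_le_sum_of_dual_feasible {ι κ : Type*} [Fintype ι] [Fintype κ]
    (A : κ → ι → ℝ) (b y : κ → ℝ) (t : ι → ℝ) (ht : ∀ i, 0 ≤ t i)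
    (hAt : ∀ k, ∑ i, t i * A k i = b k) (hy : ∀ i, ∑ k, y k * A k i ≤ 1) :
    ∑ k, y k * b k ≤ ∑ i, t i :=
  calc ∑ k, y k * b k = ∑ i, t i * ∑ k, y k * A k i := by
        simp only [← hAt, mul_sum]
        rw [sum_comm]
        exact sum_congr rfl fun _ _ => sum_congr rfl fun _ _ => by ring
    _ ≤ ∑ i, t i * 1 := sum_le_sum fun i _ => mul_le_mul_of_nonneg_left (hy i) (ht i)
    _ = ∑ i, t i := by simp

/-- `P = 0` is the identity and `P = μ.succ` is `σ^μ`; the sign is `+1` exactly when `P`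
commutes with `σ^μ`. -/
def pauliCommSign (P : Fin 4) (μ : Fin 3) : ℝ := if P = 0 ∨ P = μ.succ then 1 else -1

theorem sum_pauliCommSign (μ : Fin 3) : ∑ P, pauliCommSign P μ = 0 := by
  fin_cases μ <;> simp [pauliCommSign, Fin.sum_univ_four]

theorem sum_pauliCommSign_mul (μ ν : Fin 3) :
    ∑ P, pauliCommSign P μ * pauliCommSign P ν = if μ = ν then 4 else 0 := by
  fin_cases μ <;> fin_cases ν <;> simp [pauliCommSign, Fin.sum_univ_four] <;> norm_num

theorem neg_one_le_sum_pauliCommSign_mul (P Q : Fin 4) :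
    -1 ≤ ∑ μ, pauliCommSign P μ * pauliCommSign Q μ := by
  fin_cases P <;> fin_cases Q <;> simp [pauliCommSign, Fin.sum_univ_three] <;> norm_num

theorem sum_offDiag_mul {α : Type*} [Fintype α] [DecidableEq α] (f g : α → ℝ)
    (hf : ∑ a, f a = 0) :
    ∑ q : α × α, (if q.1 = q.2 then 0 else f q.1 * g q.2) = -∑ a, f a * g a := by
  have hsplit : ∀ q : α × α, (if q.1 = q.2 then 0 else f q.1 * g q.2)
      = f q.1 * g q.2 - if q.1 = q.2 then f q.1 * g q.2 else 0 := fun q => by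
    split_ifs <;> ring
  simp only [hsplit, sum_sub_distrib, Fintype.sum_prod_type, ← mul_sum, ← sum_mul, hf,
    zero_mul, sum_ite_eq, mem_univ, if_true, zero_sub]

theorem sum_offDiag_quarter_mul_pauliCommSign (μ ν : Fin 3) :
    ∑ q : Fin 4 × Fin 4, (if q.1 = q.2 then 0 else 1 / 4 : ℝ) *
        (pauliCommSign q.1 μ * pauliCommSign q.2 ν) = if μ = ν then -1 else 0 := by
  have hweight : ∀ q : Fin 4 × Fin 4, (if q.1 = q.2 then 0 else 1 / 4 : ℝ) *
        (pauliCommSign q.1 μ * pauliCommSign q.2 ν)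
      = if q.1 = q.2 then 0 else pauliCommSign q.1 μ / 4 * pauliCommSign q.2 ν := fun q => by
    split_ifs <;> ring
  rw [sum_congr rfl fun q _ => hweight q,
    sum_offDiag_mul (fun P => pauliCommSign P μ / 4) (pauliCommSign · ν)]
  simp only [div_mul_eq_mul_div]
  rw [← sum_div, sum_pauliCommSign_mul]
  · split_ifs <;> norm_num
  · rw [← sum_div, sum_pauliCommSign, zero_div]

/-- For the 9×16 two-qubit DAQC sign matrix with entries ε(P,μ)ε(Q,ν), and the problem
b with b_{xx} = b_{yy} = b_{zz} = −1 and all other entries 0, the minimum of ‖t‖₁ over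
nonnegative t with M t = b equals 3 = √3·‖b‖₂. -/
theorem stmt_15 :
    let eps : Fin 4 → Fin 3 → ℝ := fun P μ => if P = 0 ∨ P = μ.succ then 1 else -1
    let b : Fin 3 × Fin 3 → ℝ := fun μν => if μν.1 = μν.2 then -1 else 0
    IsLeast {x : ℝ | ∃ t : Fin 4 × Fin 4 → ℝ,
        (∀ q, 0 ≤ t q) ∧
        (∀ μν : Fin 3 × Fin 3,
          ∑ q : Fin 4 × Fin 4, t q * (eps q.1 μν.1 * eps q.2 μν.2) = b μν) ∧
        x = ∑ q, |t q|} 3 ∧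
    (3 : ℝ) = Real.sqrt 3 * Real.sqrt (∑ μν : Fin 3 × Fin 3, (b μν) ^ 2) := by
  intro eps b
  have hb_norm_sq : ∑ μν, b μν ^ 2 = 3 := by
    simp only [b, Fintype.sum_prod_type, Fin.sum_univ_three]
    norm_num [Fin.ext_iff]
  have hdual : ∀ q : Fin 4 × Fin 4, ∑ μν, b μν * (eps q.1 μν.1 * eps q.2 μν.2) ≤ 1 := by
    intro q
    simp only [b, ite_mul, neg_one_mul, zero_mul, Fintype.sum_prod_type, sum_ite_eq,
      mem_univ, if_true]
    rw [sum_neg_distrib, neg_le]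
    exact neg_one_le_sum_pauliCommSign_mul q.1 q.2
  refine ⟨⟨⟨fun q => if q.1 = q.2 then 0 else 1 / 4, fun q => by positivity,
    fun μν => sum_offDiag_quarter_mul_pauliCommSign μν.1 μν.2, ?_⟩, ?_⟩, ?_⟩
  · simp only [Fintype.sum_prod_type, Fin.sum_univ_four]
    norm_num [Fin.ext_iff]
  · rintro x ⟨t, ht, hAt, rfl⟩
    simp only [abs_of_nonneg (ht _)]
    calc (3 : ℝ) = ∑ μν, b μν * b μν := by simpa [sq] using hb_norm_sq.symm
      _ ≤ ∑ q, t q := sum_mul_le_sum_of_dual_feasible _ b b t ht hAt hdual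
  · rw [hb_norm_sq, Real.mul_self_sqrt zero_le_three]
end
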